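/- arXiv:2307.14647 — 3 statements merged into one kernel-verified Lean document; each statement's English description precedes it below -/
import Mathlib

section
/- Let R = (ℤ/2ℤ)[x, y, w]/(y² + x y). If a, b, c, a′, b′, c′ are nonnegative integers such that (1 + y)^a · (1 + x + y)^b · (1 + x + w)^c = (1 + y)^{a′} · (1 + x + y)^{b′} · (1 + x + w)^{c′} in R, then a = a′, b = b′ and c = c′. In particular, (1 + y)^a · (1 + x + y)^b · (1 + x + w)^c = 1 in R forces a = b = c = 0, so the elements 1 + y, 1 + x + y, 1 + x + w generate a free abelian group of rank 3 inside the unit group of the completed ring. -/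
open MvPolynomial

set_option synthInstance.maxHeartbeats 1000000
set_option maxHeartbeats 1000000

/-- The ideal `(y² + xy)` in `(ℤ/2ℤ)[x, y, w]`, where `x = X 0`, `y = X 1`, `w = X 2`. -/
noncomputable def relIdeal : Ideal (MvPolynomial (Fin 3) (ZMod 2)) :=
  Ideal.span {(X 1 : MvPolynomial (Fin 3) (ZMod 2)) ^ 2 + X 0 * X 1}

/-- The ring `R = (ℤ/2ℤ)[x, y, w]/(y² + xy)`. -/
noncomputable abbrev R := MvPolynomial (Fin 3) (ZMod 2) ⧸ relIdeal

noncomputable def x : R := Ideal.Quotient.mk relIdeal (X 0)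
noncomputable def y : R := Ideal.Quotient.mk relIdeal (X 1)
noncomputable def w : R := Ideal.Quotient.mk relIdeal (X 2)

/-- Lift an evaluation `(ℤ/2)[x,y,w] → (ℤ/2)[t]` killing the relation to `R`. -/
noncomputable def myLift (v : Fin 3 → Polynomial (ZMod 2))
    (hv : (v 1) ^ 2 + v 0 * v 1 = 0) : R →+* Polynomial (ZMod 2) :=
  Ideal.Quotient.lift relIdeal (MvPolynomial.aeval v).toRingHom (by
    intro p hp
    rw [relIdeal, Ideal.mem_span_singleton] at hp
    obtain ⟨q, rfl⟩ := hp
    simp [hv])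

lemma myLift_x (v hv) : myLift v hv x = v 0 := by
  simp [myLift, x, Ideal.Quotient.lift_mk]

lemma myLift_y (v hv) : myLift v hv y = v 1 := by
  simp [myLift, y, Ideal.Quotient.lift_mk]

lemma myLift_w (v hv) : myLift v hv w = v 2 := by
  simp [myLift, w, Ideal.Quotient.lift_mk]

lemma key (n m : ℕ)
    (h : (1 + Polynomial.X : Polynomial (ZMod 2)) ^ n = (1 + Polynomial.X) ^ m) :
    n = m := by
  have hd : (1 + Polynomial.X : Polynomial (ZMod 2)).natDegree = 1 := by
    rw [add_comm, ← map_one (Polynomial.C (R := ZMod 2))]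
    exact Polynomial.natDegree_X_add_C 1
  have := congrArg Polynomial.natDegree h
  rwa [Polynomial.natDegree_pow, Polynomial.natDegree_pow, hd, mul_one, mul_one] at this

/-- If `(1+y)^a (1+x+y)^b (1+x+w)^c = (1+y)^a' (1+x+y)^b' (1+x+w)^c'` in
`R = (ℤ/2ℤ)[x,y,w]/(y²+xy)`, then `a = a'`, `b = b'` and `c = c'`; in particular such a
product equals `1` only when `a = b = c = 0`, so `1+y`, `1+x+y`, `1+x+w` generate a free
abelian group of rank `3`. -/
theorem stmt2 (a b c a' b' c' : ℕ)
    (h : (1 + y) ^ a * (1 + x + y) ^ b * (1 + x + w) ^ c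
        = (1 + y) ^ a' * (1 + x + y) ^ b' * (1 + x + w) ^ c') :
    a = a' ∧ b = b' ∧ c = c' := by
  -- x ↦ t, y ↦ t, w ↦ t : gives a = a'
  have hv1 : (![Polynomial.X, Polynomial.X, Polynomial.X] 1 : Polynomial (ZMod 2)) ^ 2
      + ![Polynomial.X, Polynomial.X, Polynomial.X] 0
        * ![Polynomial.X, Polynomial.X, Polynomial.X] 1 = 0 := by
    show (Polynomial.X : Polynomial (ZMod 2)) ^ 2 + Polynomial.X * Polynomial.X = 0
    rw [← sq]; exact CharTwo.add_self_eq_zero _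
  have ha : a = a' := by
    have h1 := congrArg (myLift _ hv1) h
    simp only [map_mul, map_pow, map_add, map_one, myLift_x, myLift_y, myLift_w] at h1
    simp only [Matrix.cons_val_zero, Matrix.cons_val_one, Matrix.head_cons,
      Matrix.cons_val_two, Matrix.tail_cons, add_assoc, CharTwo.add_self_eq_zero,
      add_zero, one_pow, mul_one] at h1
    exact key _ _ h1
  -- x ↦ t, y ↦ 0, w ↦ t : gives b = b'
  have hv2 : (![Polynomial.X, 0, Polynomial.X] 1 : Polynomial (ZMod 2)) ^ 2
      + ![Polynomial.X, 0, Polynomial.X] 0 * ![Polynomial.X, 0, Polynomial.X] 1 = 0 := by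
    show (0 : Polynomial (ZMod 2)) ^ 2 + Polynomial.X * 0 = 0
    simp
  have hb : b = b' := by
    have h1 := congrArg (myLift _ hv2) h
    simp only [map_mul, map_pow, map_add, map_one, myLift_x, myLift_y, myLift_w] at h1
    simp only [Matrix.cons_val_zero, Matrix.cons_val_one, Matrix.head_cons,
      Matrix.cons_val_two, Matrix.tail_cons, add_assoc, CharTwo.add_self_eq_zero,
      add_zero, one_pow, mul_one, one_mul] at h1
    exact key _ _ h1
  -- x ↦ t, y ↦ 0, w ↦ 0 : gives b + c = b' + c'
  have hv3 : (![Polynomial.X, 0, 0] 1 : Polynomial (ZMod 2)) ^ 2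
      + ![Polynomial.X, 0, 0] 0 * ![Polynomial.X, 0, 0] 1 = 0 := by
    show (0 : Polynomial (ZMod 2)) ^ 2 + Polynomial.X * 0 = 0
    simp
  have hbc : b + c = b' + c' := by
    have h1 := congrArg (myLift _ hv3) h
    simp only [map_mul, map_pow, map_add, map_one, myLift_x, myLift_y, myLift_w] at h1
    simp only [Matrix.cons_val_zero, Matrix.cons_val_one, Matrix.head_cons,
      Matrix.cons_val_two, Matrix.tail_cons, add_zero, one_pow, mul_one, one_mul,
      ← pow_add] at h1
    exact key _ _ h1
  exact ⟨ha, hb, by omega⟩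
end

section
/- Let m be a positive integer divisible by 4 and let π be a finite-dimensional complex representation of D_m, decomposed as π ≅ n₀·1 ⊕ n_s·χ_s ⊕ n_r·χ_r ⊕ n_{rs}·χ_{rs} ⊕ ⊕_{i=1}^{m/2−1} d_i·σ_i. Then the restriction of π to E₁ is isomorphic to (n₀ + n_r + d_e)·1 ⊕ (n_s + n_{rs} + d_e)·α₁ ⊕ d_o·β₁ ⊕ d_o·(α₁ ⊗ β₁), and the restriction of π to E₂ is isomorphic to (n₀ + n_{rs} + d_e)·1 ⊕ (n_s + n_r + d_e)·α₂ ⊕ d_o·β₂ ⊕ d_o·(α₂ ⊗ β₂). -/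
open DihedralGroup

/-- The rotation matrix `[[cos t, −sin t], [sin t, cos t]]`, viewed as a complex matrix. -/
noncomputable def rotMat (t : ℝ) : Matrix (Fin 2) (Fin 2) ℂ :=
  !![(Real.cos t : ℂ), -(Real.sin t : ℂ); (Real.sin t : ℂ), (Real.cos t : ℂ)]

/-- The reflection matrix `[[0, 1], [1, 0]]`. -/
noncomputable def flipMat : Matrix (Fin 2) (Fin 2) ℂ := !![0, 1; 1, 0]

/-- The matrix of `σ_k(g)` for `g ∈ D_m`: the rotation `r^i` maps to the rotation matrix of
angle `i·θ_k` with `θ_k = 2πk/m`, and the reflection `s·r^i` (Mathlib's `sr i`) maps to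
`σ_k(s)·σ_k(r)^i`. -/
noncomputable def sigmaMat (m k : ℕ) : DihedralGroup m → Matrix (Fin 2) (Fin 2) ℂ
  | DihedralGroup.r i => rotMat (2 * Real.pi * k * i.val / m)
  | DihedralGroup.sr i => flipMat * rotMat (2 * Real.pi * k * i.val / m)

/-- The linear action of `g` in the representation `σ_k` of `D_m` on `ℂ²`. -/
noncomputable def sigmaLin (m k : ℕ) (g : DihedralGroup m) : (Fin 2 → ℂ) →ₗ[ℂ] (Fin 2 → ℂ) :=
  Matrix.toLin' (sigmaMat m k g)

/-- The linear character `χ_s` of `D_m`: `χ_s(r) = 1`, `χ_s(s) = −1`. -/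
def chiS (m : ℕ) : DihedralGroup m → ℂ
  | DihedralGroup.r _ => 1
  | DihedralGroup.sr _ => -1

/-- The linear character `χ_r` of `D_m`: `χ_r(r) = −1`, `χ_r(s) = 1`. -/
def chiR (m : ℕ) : DihedralGroup m → ℂ
  | DihedralGroup.r i => (-1) ^ i.val
  | DihedralGroup.sr i => (-1) ^ i.val

/-- The linear character `χ_rs` of `D_m`: `χ_rs(r) = −1`, `χ_rs(s) = −1`. -/
def chiRS (m : ℕ) : DihedralGroup m → ℂ
  | DihedralGroup.r i => (-1) ^ i.val
  | DihedralGroup.sr i => -((-1) ^ i.val)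

/-- The index type for `n₀·1 ⊕ n_s·χ_s ⊕ n_r·χ_r ⊕ n_rs·χ_rs`. -/
abbrev LinIdx (n₀ ns nr nrs : ℕ) := Fin n₀ ⊕ Fin ns ⊕ Fin nr ⊕ Fin nrs

/-- The corresponding family of linear characters: `n₀` copies of `1`, `n_s` copies of `χ_s`,
`n_r` copies of `χ_r`, `n_rs` copies of `χ_rs`. -/
def linChar (m n₀ ns nr nrs : ℕ) : LinIdx n₀ ns nr nrs → DihedralGroup m → ℂ :=
  Sum.elim (fun _ _ => 1)
    (Sum.elim (fun _ => chiS m) (Sum.elim (fun _ => chiR m) (fun _ => chiRS m)))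

/-- The index type for `⊕_{i=1}^{m/2−1} d_i·σ_i` (the index `i : Fin (m/2−1)` stands for
`σ_{i+1}`). -/
abbrev SigIdx (N : ℕ) (d : Fin N → ℕ) := Σ i : Fin N, Fin (d i)

/-- The underlying space of `n₀·1 ⊕ n_s·χ_s ⊕ n_r·χ_r ⊕ n_rs·χ_rs ⊕ ⊕_{i=1}^{m/2−1} d_i·σ_i`. -/
abbrev BigSpace (m n₀ ns nr nrs : ℕ) (d : Fin (m / 2 - 1) → ℕ) :=
  (LinIdx n₀ ns nr nrs → ℂ) × (SigIdx (m / 2 - 1) d → Fin 2 → ℂ)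

/-- The action of `g ∈ D_m` on `n₀·1 ⊕ n_s·χ_s ⊕ n_r·χ_r ⊕ n_rs·χ_rs ⊕ ⊕ d_i·σ_i`. -/
noncomputable def bigAct (m n₀ ns nr nrs : ℕ) (d : Fin (m / 2 - 1) → ℕ)
    (g : DihedralGroup m) :
    BigSpace m n₀ ns nr nrs d →ₗ[ℂ] BigSpace m n₀ ns nr nrs d :=
  LinearMap.prodMap
    (LinearMap.pi fun i => linChar m n₀ ns nr nrs i g • LinearMap.proj i)
    (LinearMap.pi fun x => (sigmaLin m (x.1.val + 1) g).comp (LinearMap.proj x))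

/-- `π` decomposes as `n₀·1 ⊕ n_s·χ_s ⊕ n_r·χ_r ⊕ n_rs·χ_rs ⊕ ⊕_{i=1}^{m/2−1} d_i·σ_i`:
there is a `ℂ`-linear equivalence intertwining `π` with the direct-sum action. -/
def IsDecomposed {m : ℕ} {V : Type} [AddCommGroup V] [Module ℂ V]
    (π : Representation ℂ (DihedralGroup m) V) (n₀ ns nr nrs : ℕ)
    (d : Fin (m / 2 - 1) → ℕ) : Prop :=
  ∃ e : V ≃ₗ[ℂ] BigSpace m n₀ ns nr nrs d,
    ∀ g v, e (π g v) = bigAct m n₀ ns nr nrs d g (e v)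

/-- The Klein four subgroup `E₁ = {1, s, r_c, s·r_c}` of `D_m` (for `4 ∣ m`), `r_c = r^(m/2)`. -/
def E₁ (m : ℕ) : Subgroup (DihedralGroup m) :=
  Subgroup.closure {DihedralGroup.sr 0, DihedralGroup.r ((m / 2 : ℕ) : ZMod m)}

/-- The Klein four subgroup `E₂ = {1, r·s, r_c, r·s·r_c}` of `D_m` (for `4 ∣ m`). -/
def E₂ (m : ℕ) : Subgroup (DihedralGroup m) :=
  Subgroup.closure {DihedralGroup.r 1 * DihedralGroup.sr 0,
    DihedralGroup.r ((m / 2 : ℕ) : ZMod m)}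

/-- A function on `D_m` restricting to the character `α_i` of `E_i` (`i = 1, 2`):
`α₁(s) = α₂(rs) = −1`, `α_i(r_c) = 1`. -/
def α (m : ℕ) : DihedralGroup m → ℂ
  | DihedralGroup.r _ => 1
  | DihedralGroup.sr _ => -1

/-- A function on `D_m` restricting to the character `β₁` of `E₁`:
`β₁(1) = β₁(s) = 1` and `β₁(r_c) = β₁(s·r_c) = −1`. -/
def β₁ (m : ℕ) : DihedralGroup m → ℂ
  | DihedralGroup.r i => if i = 0 then 1 else -1
  | DihedralGroup.sr i => if i = 0 then 1 else -1

/-- A function on `D_m` restricting to the character `β₂` of `E₂`: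
`β₂(1) = β₂(r·s) = 1` and `β₂(r_c) = β₂(r·s·r_c) = −1`. -/
def β₂ (m : ℕ) : DihedralGroup m → ℂ
  | DihedralGroup.r i => if i = 0 then 1 else -1
  | DihedralGroup.sr i => if i = -1 then 1 else -1

/-- The restriction of `π` to the subgroup `E` is isomorphic to the direct sum of the linear
characters `a·χ₀ ⊕ b·χ₁ ⊕ c·χ₂ ⊕ e·χ₃` of `E`. -/
def RestrictionIso {m : ℕ} {V : Type} [AddCommGroup V] [Module ℂ V]
    (π : Representation ℂ (DihedralGroup m) V) (E : Subgroup (DihedralGroup m))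
    (a b c e : ℕ) (χ₀ χ₁ χ₂ χ₃ : DihedralGroup m → ℂ) : Prop :=
  ∃ f : V ≃ₗ[ℂ] ((Fin a ⊕ Fin b ⊕ Fin c ⊕ Fin e) → ℂ),
    ∀ g ∈ E, ∀ v, f (π g v) =
      fun j => Sum.elim (fun _ => χ₀ g)
        (Sum.elim (fun _ => χ₁ g) (Sum.elim (fun _ => χ₂ g) (fun _ => χ₃ g))) j * f v j


namespace Stmt8Aux

/-! ### Diagonal-weights decomposition framework -/

def HW {m : ℕ} {V : Type} [AddCommGroup V] [Module ℂ V] (ρ : DihedralGroup m → V →ₗ[ℂ] V)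
    (E : Subgroup (DihedralGroup m)) {I : Type} (w : I → DihedralGroup m → ℂ) : Prop :=
  ∃ f : V ≃ₗ[ℂ] (I → ℂ), ∀ g ∈ E, ∀ v j, f (ρ g v) j = w j g * f v j

lemma HW_of_equiv {m : ℕ} {V W : Type} [AddCommGroup V] [Module ℂ V] [AddCommGroup W] [Module ℂ W]
    {ρV : DihedralGroup m → V →ₗ[ℂ] V} {ρW : DihedralGroup m → W →ₗ[ℂ] W}
    {E : Subgroup (DihedralGroup m)} {I : Type} {w : I → DihedralGroup m → ℂ}
    (e : V ≃ₗ[ℂ] W) (he : ∀ g v, e (ρV g v) = ρW g (e v)) (h : HW ρW E w) : HW ρV E w := by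
  obtain ⟨f, hf⟩ := h
  exact ⟨e.trans f, fun g hg v j => by simp only [LinearEquiv.trans_apply, he g v, hf g hg]⟩

lemma HW_prod {m : ℕ} {V W : Type} [AddCommGroup V] [Module ℂ V] [AddCommGroup W] [Module ℂ W]
    {ρV : DihedralGroup m → V →ₗ[ℂ] V} {ρW : DihedralGroup m → W →ₗ[ℂ] W}
    {E : Subgroup (DihedralGroup m)} {I J : Type} {w₁ : I → DihedralGroup m → ℂ}
    {w₂ : J → DihedralGroup m → ℂ} (h1 : HW ρV E w₁) (h2 : HW ρW E w₂) :
    HW (fun g => (ρV g).prodMap (ρW g)) E (Sum.elim w₁ w₂) := by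
  obtain ⟨f1, hf1⟩ := h1
  obtain ⟨f2, hf2⟩ := h2
  refine ⟨(f1.prodCongr f2).trans (LinearEquiv.sumArrowLequivProdArrow I J ℂ ℂ).symm,
    fun g hg v j => ?_⟩
  cases j with
  | inl i =>
      simp only [LinearEquiv.trans_apply, LinearEquiv.prodCongr_apply, LinearMap.prodMap_apply,
        Prod.map, LinearEquiv.sumArrowLequivProdArrow_symm_apply_inl, Sum.elim_inl]
      exact hf1 g hg v.1 i
  | inr i =>
      simp only [LinearEquiv.trans_apply, LinearEquiv.prodCongr_apply, LinearMap.prodMap_apply,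
        Prod.map, LinearEquiv.sumArrowLequivProdArrow_symm_apply_inr, Sum.elim_inr]
      exact hf2 g hg v.2 i

lemma HW_pi {m : ℕ} {X : Type} {W : X → Type} [∀ x, AddCommGroup (W x)] [∀ x, Module ℂ (W x)]
    (ρ : ∀ x, DihedralGroup m → W x →ₗ[ℂ] W x) {E : Subgroup (DihedralGroup m)}
    {I : X → Type} (w : ∀ x, I x → DihedralGroup m → ℂ)
    (h : ∀ x, HW (ρ x) E (w x)) :
    HW (fun g => LinearMap.pi (fun x => (ρ x g).comp (LinearMap.proj x))) E
      (fun p : Σ x, I x => w p.1 p.2) := by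
  choose f hf using h
  refine ⟨(LinearEquiv.piCongrRight f).trans
    (LinearEquiv.piCurry ℂ fun (x : X) (_ : I x) => ℂ).symm, fun g hg v p => ?_⟩
  obtain ⟨x, i⟩ := p
  simpa [LinearEquiv.piCurry, Sigma.uncurry, Sigma.curry] using hf x g hg (v x) i

/-! ### Rotation matrices -/

lemma rotMat_add (a b : ℝ) : rotMat (a + b) = rotMat a * rotMat b := by
  ext i j
  fin_cases i <;> fin_cases j <;>
    simp [rotMat, Matrix.mul_apply, Fin.sum_univ_two, Real.cos_add, Real.sin_add]
  all_goals push_cast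
  all_goals ring

lemma rotMat_zero : rotMat 0 = 1 := by
  ext i j
  fin_cases i <;> fin_cases j <;> simp [rotMat, Matrix.one_apply]

lemma rotMat_nat_mul_pi (k : ℕ) : rotMat (k * Real.pi) = ((-1) ^ k : ℂ) • 1 := by
  have hc : Real.cos ((k : ℝ) * Real.pi) = (-1) ^ k := by
    have := Real.cos_int_mul_pi_sub 0 (k : ℤ)
    push_cast at this
    simpa using this
  have hs : Real.sin ((k : ℝ) * Real.pi) = 0 := by
    have := Real.sin_int_mul_pi (k : ℤ)
    push_cast at this
    simpa using this
  ext i j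
  fin_cases i <;> fin_cases j <;>
    simp [rotMat, hc, hs, Matrix.smul_apply, Matrix.one_apply]
  all_goals push_cast
  all_goals ring

lemma conj_key (t : ℝ) :
    rotMat (t / 2 - Real.pi / 4) * (flipMat * rotMat t) =
      !![(1 : ℂ), 0; 0, -1] * rotMat (t / 2 - Real.pi / 4) := by
  obtain ⟨u, rfl⟩ : ∃ u, t = u + u := ⟨t / 2, by ring⟩
  have h2 : (u + u) / 2 = u := by ring
  ext i j
  fin_cases i <;> fin_cases j <;>
    · simp only [rotMat, flipMat, Matrix.mul_apply, Fin.sum_univ_two, h2]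
      norm_num [Matrix.cons_val_zero, Matrix.cons_val_one, Matrix.head_cons,
        -Complex.ofReal_cos, -Complex.ofReal_sin]
      norm_cast
      rw [Real.cos_sub, Real.sin_sub, Real.cos_add, Real.sin_add,
        Real.cos_pi_div_four, Real.sin_pi_div_four]
      try linear_combination (Real.sqrt 2 / 2 * (Real.cos u + Real.sin u)) * Real.sin_sq_add_cos_sq u
      try linear_combination (Real.sqrt 2 / 2 * (Real.cos u - Real.sin u)) * Real.sin_sq_add_cos_sq u
      try linear_combination (-(Real.sqrt 2) / 2 * (Real.cos u + Real.sin u)) * Real.sin_sq_add_cos_sq u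

lemma diag_mulVec (B : Matrix (Fin 2) (Fin 2) ℂ) (v : Fin 2 → ℂ) (s : Fin 2) :
    (!![(1 : ℂ), 0; 0, -1] * B).mulVec v s = (if s = 0 then 1 else -1) * B.mulVec v s := by
  fin_cases s <;>
    simp [Matrix.mulVec, Matrix.mul_apply, dotProduct, Fin.sum_univ_two] <;> ring

/-! ### The basic 2-dimensional block -/

lemma HW_block {m : ℕ} (k : ℕ) (j₀ cc : ZMod m) (E : Subgroup (DihedralGroup m)) (t : ℝ)
    (hr0 : sigmaMat m k (DihedralGroup.r 0) = 1)
    (hsr : sigmaMat m k (DihedralGroup.sr j₀) = flipMat * rotMat t)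
    (hrc : sigmaMat m k (DihedralGroup.r cc) = ((-1) ^ k : ℂ) • 1)
    (hsrc : sigmaMat m k (DihedralGroup.sr (j₀ + cc)) = ((-1) ^ k : ℂ) • (flipMat * rotMat t))
    (hE : ∀ g ∈ E, g = DihedralGroup.r 0 ∨ g = DihedralGroup.sr j₀ ∨
      g = DihedralGroup.r cc ∨ g = DihedralGroup.sr (j₀ + cc))
    (βf : DihedralGroup m → ℂ) (hb0 : βf (.r 0) = 1) (hb1 : βf (.sr j₀) = 1)
    (hb2 : βf (.r cc) = (-1) ^ k) (hb3 : βf (.sr (j₀ + cc)) = (-1) ^ k) :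
    HW (sigmaLin m k) E (fun s : Fin 2 => fun g => βf g * (if s = 0 then 1 else α m g)) := by
  have hinv : rotMat (t / 2 - Real.pi / 4) * rotMat (-(t / 2 - Real.pi / 4)) = 1 := by
    rw [← rotMat_add]
    simpa using rotMat_zero
  have hinv' : rotMat (-(t / 2 - Real.pi / 4)) * rotMat (t / 2 - Real.pi / 4) = 1 := by
    rw [← rotMat_add]
    simpa using rotMat_zero
  refine ⟨LinearEquiv.ofLinear (Matrix.toLin' (rotMat (t / 2 - Real.pi / 4)))
    (Matrix.toLin' (rotMat (-(t / 2 - Real.pi / 4))))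
    (by rw [← Matrix.toLin'_mul, hinv, Matrix.toLin'_one])
    (by rw [← Matrix.toLin'_mul, hinv', Matrix.toLin'_one]), ?_⟩
  intro g hg v s
  have key : ∀ M : Matrix (Fin 2) (Fin 2) ℂ, ∀ v : Fin 2 → ℂ,
      Matrix.toLin' (rotMat (t / 2 - Real.pi / 4)) (Matrix.toLin' M v) =
        (rotMat (t / 2 - Real.pi / 4) * M).mulVec v := by
    intro M v
    rw [← LinearMap.comp_apply, ← Matrix.toLin'_mul, Matrix.toLin'_apply]
  simp only [LinearEquiv.ofLinear_apply, sigmaLin]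
  rcases hE g hg with rfl | rfl | rfl | rfl
  · rw [hr0, key, mul_one, hb0]
    simp [hb0, Matrix.toLin'_apply, α]
  · rw [hsr, key, conj_key, diag_mulVec]
    simp only [Matrix.toLin'_apply, hb1, α]
    split <;> ring
  · rw [hrc, key, mul_smul_comm, mul_one, Matrix.smul_mulVec]
    simp only [Pi.smul_apply, Matrix.toLin'_apply, hb2, α, smul_eq_mul]
    split <;> ring
  · rw [hsrc, key, mul_smul_comm, conj_key, Matrix.smul_mulVec]
    simp only [Pi.smul_apply, diag_mulVec, Matrix.toLin'_apply, hb3, α, smul_eq_mul]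
    split <;> ring

/-! ### Values of `sigmaMat` on the four elements -/

lemma neg_one_pow_smul_self (k : ℕ) (M : Matrix (Fin 2) (Fin 2) ℂ) :
    ((-1) ^ k : ℂ) • ((-1) ^ k : ℂ) • M = M := by
  rw [smul_smul, ← pow_add, ← two_mul, pow_mul]
  norm_num

lemma sig_r0 {m : ℕ} (hm : 0 < m) (k : ℕ) : sigmaMat m k (DihedralGroup.r 0) = 1 := by
  haveI : NeZero m := ⟨hm.ne'⟩
  show rotMat _ = 1
  rw [ZMod.val_zero]
  norm_num [rotMat_zero]

lemma angle_c {m : ℕ} (hm : 0 < m) (h2 : 2 ∣ m) (k : ℕ) :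
    2 * Real.pi * k * ((m / 2 : ℕ) : ℝ) / m = k * Real.pi := by
  have hM : ((m / 2 : ℕ) : ℝ) * 2 = m := by
    exact_mod_cast congrArg (Nat.cast : ℕ → ℝ) (Nat.div_mul_cancel h2)
  have hm' : (m : ℝ) ≠ 0 := by
    exact_mod_cast hm.ne'
  rw [div_eq_iff hm', ← hM]
  ring

lemma sig_rc {m : ℕ} (hm : 0 < m) (h2 : 2 ∣ m) (k : ℕ) :
    sigmaMat m k (DihedralGroup.r ((m / 2 : ℕ) : ZMod m)) = ((-1) ^ k : ℂ) • 1 := by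
  show rotMat _ = _
  rw [ZMod.val_natCast_of_lt (Nat.div_lt_self hm one_lt_two), angle_c hm h2 k,
    rotMat_nat_mul_pi]

lemma sig_sr0 {m : ℕ} (hm : 0 < m) (k : ℕ) :
    sigmaMat m k (DihedralGroup.sr 0) = flipMat * rotMat 0 := by
  haveI : NeZero m := ⟨hm.ne'⟩
  show flipMat * rotMat _ = _
  rw [ZMod.val_zero]
  norm_num

lemma sig_src {m : ℕ} (hm : 0 < m) (h2 : 2 ∣ m) (k : ℕ) :
    sigmaMat m k (DihedralGroup.sr (0 + ((m / 2 : ℕ) : ZMod m))) =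
      ((-1) ^ k : ℂ) • (flipMat * rotMat 0) := by
  rw [zero_add]
  show flipMat * rotMat _ = _
  rw [ZMod.val_natCast_of_lt (Nat.div_lt_self hm one_lt_two), angle_c hm h2 k,
    rotMat_nat_mul_pi, mul_smul_comm, rotMat_zero]

lemma neg_one_eq {m : ℕ} (hm4 : 4 ≤ m) : (-1 : ZMod m) = ((m - 1 : ℕ) : ZMod m) := by
  have : ((m - 1 : ℕ) : ZMod m) = (m : ZMod m) - 1 := by
    push_cast [Nat.cast_sub (by omega : 1 ≤ m)]
    ring
  rw [this, ZMod.natCast_self]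
  ring

lemma sig_srm1 {m : ℕ} (hm4 : 4 ≤ m) (k : ℕ) :
    sigmaMat m k (DihedralGroup.sr (-1)) =
      flipMat * rotMat (2 * Real.pi * k * ((m - 1 : ℕ) : ℝ) / m) := by
  rw [neg_one_eq hm4]
  show flipMat * rotMat _ = _
  rw [ZMod.val_natCast_of_lt (by omega : m - 1 < m)]

lemma neg_one_add_c {m : ℕ} (hm4 : 4 ≤ m) :
    (-1 : ZMod m) + ((m / 2 : ℕ) : ZMod m) = ((m / 2 - 1 : ℕ) : ZMod m) := by
  have h1 : 1 ≤ m / 2 := by omega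
  have : ((m / 2 - 1 : ℕ) : ZMod m) = ((m / 2 : ℕ) : ZMod m) - 1 := by
    push_cast [Nat.cast_sub h1]
    ring
  rw [this]
  ring

lemma sig_srm1c {m : ℕ} (hm4 : 4 ≤ m) (h2 : 2 ∣ m) (k : ℕ) :
    sigmaMat m k (DihedralGroup.sr ((-1 : ZMod m) + ((m / 2 : ℕ) : ZMod m))) =
      ((-1) ^ k : ℂ) • (flipMat * rotMat (2 * Real.pi * k * ((m - 1 : ℕ) : ℝ) / m)) := by
  rw [neg_one_add_c hm4]
  show flipMat * rotMat _ = _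
  rw [ZMod.val_natCast_of_lt (by omega : m / 2 - 1 < m)]
  have hang : 2 * Real.pi * k * ((m - 1 : ℕ) : ℝ) / m =
      2 * Real.pi * k * ((m / 2 - 1 : ℕ) : ℝ) / m + k * Real.pi := by
    have hM : ((m / 2 : ℕ) : ℝ) * 2 = m := by
      exact_mod_cast congrArg (Nat.cast : ℕ → ℝ) (Nat.div_mul_cancel h2)
    have e1 : ((m - 1 : ℕ) : ℝ) = (m : ℝ) - 1 := by
      push_cast [Nat.cast_sub (by omega : 1 ≤ m)]; ring
    have e2 : ((m / 2 - 1 : ℕ) : ℝ) = ((m / 2 : ℕ) : ℝ) - 1 := by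
      push_cast [Nat.cast_sub (by omega : 1 ≤ m / 2)]; ring
    have hm' : (m : ℝ) ≠ 0 := by
      have : (0:ℝ) < m := by exact_mod_cast (by omega : 0 < m)
      exact this.ne'
    rw [e1, e2, div_add' _ _ _ hm', ← hM]
    ring
  rw [hang, rotMat_add, rotMat_nat_mul_pi]
  rw [mul_smul_comm, mul_one, mul_smul_comm, smul_smul, ← pow_add, ← two_mul, pow_mul]
  norm_num

/-! ### The four-element subgroups -/

lemma closure_four {m : ℕ} (a cc : ZMod m) (hcc : cc + cc = 0) :
    ∀ g ∈ Subgroup.closure {DihedralGroup.sr a, DihedralGroup.r cc},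
      g = DihedralGroup.r 0 ∨ g = DihedralGroup.sr a ∨ g = DihedralGroup.r cc ∨
        g = DihedralGroup.sr (a + cc) := by
  intro g hg
  induction hg using Subgroup.closure_induction with
  | mem x hx =>
      rcases hx with rfl | rfl
      · exact Or.inr (Or.inl rfl)
      · exact Or.inr (Or.inr (Or.inl rfl))
  | one => exact Or.inl one_def
  | mul x y hx hy px py =>
      rcases px with rfl | rfl | rfl | rfl <;> rcases py with rfl | rfl | rfl | rfl <;>
        simp only [r_mul_r, r_mul_sr, sr_mul_r, sr_mul_sr, or_true, true_or] <;>
        first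
          | trivial
          | (refine Or.inl (congrArg DihedralGroup.r ?_); first | linear_combination hcc | linear_combination -hcc | linear_combination (0 : ZMod m) * hcc)
          | (refine Or.inr (Or.inl (congrArg DihedralGroup.sr ?_)); first | linear_combination hcc | linear_combination -hcc | linear_combination (0 : ZMod m) * hcc)
          | (refine Or.inr (Or.inr (Or.inl (congrArg DihedralGroup.r ?_))); first | linear_combination hcc | linear_combination -hcc | linear_combination (0 : ZMod m) * hcc)
          | (refine Or.inr (Or.inr (Or.inr (congrArg DihedralGroup.sr ?_))); first | linear_combination hcc | linear_combination -hcc | linear_combination (0 : ZMod m) * hcc)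
  | inv x hx px =>
      rcases px with rfl | rfl | rfl | rfl
      · left
        rw [← one_def, inv_one]
      · right; left
        exact inv_eq_of_mul_eq_one_right (sr_mul_self a)
      · right; right; left
        refine inv_eq_of_mul_eq_one_right ?_
        rw [r_mul_r, hcc, ← one_def]
      · right; right; right
        exact inv_eq_of_mul_eq_one_right (sr_mul_self _)

/-! ### Relabelling -/

def blockOf {a b c e : ℕ} : (Fin a ⊕ Fin b ⊕ Fin c ⊕ Fin e) → Fin 4 :=
  Sum.elim (fun _ => 0) (Sum.elim (fun _ => 1) (Sum.elim (fun _ => 2) (fun _ => 3)))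

lemma exists_labelEquiv {I : Type} [Fintype I] (ℓ : I → Fin 4) (a b c e : ℕ)
    (h0 : Fintype.card {i // ℓ i = 0} = a) (h1 : Fintype.card {i // ℓ i = 1} = b)
    (h2 : Fintype.card {i // ℓ i = 2} = c) (h3 : Fintype.card {i // ℓ i = 3} = e) :
    ∃ σ : I ≃ (Fin a ⊕ Fin b ⊕ Fin c ⊕ Fin e), ∀ i, blockOf (σ i) = ℓ i := by
  have fin4 : ∀ t : Fin 4, t ≠ 0 → t ≠ 1 → t ≠ 2 → t = 3 := by decide
  let e0 := Fintype.equivFinOfCardEq h0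
  let e1 := Fintype.equivFinOfCardEq h1
  let e2 := Fintype.equivFinOfCardEq h2
  let e3 := Fintype.equivFinOfCardEq h3
  refine ⟨⟨fun i =>
      if h : ℓ i = 0 then .inl (e0 ⟨i, h⟩)
      else if h1' : ℓ i = 1 then .inr (.inl (e1 ⟨i, h1'⟩))
      else if h2' : ℓ i = 2 then .inr (.inr (.inl (e2 ⟨i, h2'⟩)))
      else .inr (.inr (.inr (e3 ⟨i, fin4 _ h h1' h2'⟩))),
    Sum.elim (fun x => (e0.symm x).1) (Sum.elim (fun x => (e1.symm x).1)
      (Sum.elim (fun x => (e2.symm x).1) (fun x => (e3.symm x).1))), ?_, ?_⟩, ?_⟩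
  · intro i
    by_cases h : ℓ i = 0
    · simp [h]
    · by_cases h1' : ℓ i = 1
      · simp [h, h1']
      · by_cases h2' : ℓ i = 2
        · simp [h, h1', h2']
        · simp [h, h1', h2']
  · intro j
    rcases j with x | x | x | x
    · have hp := (e0.symm x).2
      simp [hp, Subtype.coe_eta]
    · have hp := (e1.symm x).2
      have : ℓ (e1.symm x).1 ≠ 0 := by simp [hp]
      simp [hp, this, Subtype.coe_eta]
    · have hp := (e2.symm x).2
      have h0' : ℓ (e2.symm x).1 ≠ 0 := by simp [hp]
      have h1' : ℓ (e2.symm x).1 ≠ 1 := by simp [hp]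
      simp [hp, h0', h1', Subtype.coe_eta]
    · have hp := (e3.symm x).2
      have h0' : ℓ (e3.symm x).1 ≠ 0 := by simp [hp]
      have h1' : ℓ (e3.symm x).1 ≠ 1 := by simp [hp]
      have h2' : ℓ (e3.symm x).1 ≠ 2 := by simp [hp]
      simp [hp, h0', h1', h2', Subtype.coe_eta]
  · intro i
    by_cases h : ℓ i = 0
    · simp [Equiv.coe_fn_mk, h, blockOf]
    · by_cases h1' : ℓ i = 1
      · simp [Equiv.coe_fn_mk, h, h1', blockOf]
      · by_cases h2' : ℓ i = 2
        · simp [Equiv.coe_fn_mk, h, h1', h2', blockOf]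
        · have := fin4 _ h h1' h2'
          simp [Equiv.coe_fn_mk, h, h1', h2', blockOf, this]

lemma restrictionIso_of_HW {m : ℕ} {V : Type} [AddCommGroup V] [Module ℂ V]
    (π : Representation ℂ (DihedralGroup m) V) (E : Subgroup (DihedralGroup m))
    {I : Type} [Fintype I] (w : I → DihedralGroup m → ℂ) (ℓ : I → Fin 4)
    (χ₀ χ₁ χ₂ χ₃ : DihedralGroup m → ℂ) (a b c e : ℕ)
    (hHW : HW (fun g => π g) E w)
    (hw : ∀ i, ∀ g ∈ E, w i g = ![χ₀, χ₁, χ₂, χ₃] (ℓ i) g)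
    (h0 : Fintype.card {i // ℓ i = 0} = a) (h1 : Fintype.card {i // ℓ i = 1} = b)
    (h2 : Fintype.card {i // ℓ i = 2} = c) (h3 : Fintype.card {i // ℓ i = 3} = e) :
    RestrictionIso π E a b c e χ₀ χ₁ χ₂ χ₃ := by
  obtain ⟨f, hf⟩ := hHW
  obtain ⟨σ, hσ⟩ := exists_labelEquiv ℓ a b c e h0 h1 h2 h3
  refine ⟨f.trans (LinearEquiv.funCongrLeft ℂ ℂ σ.symm), fun g hg v => ?_⟩
  funext j
  have h1' : ∀ u : I → ℂ, (LinearEquiv.funCongrLeft ℂ ℂ σ.symm) u j = u (σ.symm j) := by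
    intro u
    rfl
  simp only [LinearEquiv.trans_apply, h1']
  rw [hf g hg v (σ.symm j), hw _ g hg, ← hσ, Equiv.apply_symm_apply]
  rcases j with x | x | x | x <;> rfl

lemma card_fiber {N : ℕ} {d : Fin N → ℕ} (n₀ ns nr nrs : ℕ)
    (ℓsig : (Σ _x : SigIdx N d, Fin 2) → Fin 4) (t0 t1 t2 t3 : Fin 4) (t : Fin 4) :
    Fintype.card {i : LinIdx n₀ ns nr nrs ⊕ Σ _x : SigIdx N d, Fin 2 //
      Sum.elim (Sum.elim (fun _ => t0) (Sum.elim (fun _ => t1)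
        (Sum.elim (fun _ => t2) (fun _ => t3)))) ℓsig i = t} =
    (if t0 = t then n₀ else 0) + (if t1 = t then ns else 0) + (if t2 = t then nr else 0) +
      (if t3 = t then nrs else 0) +
      ∑ x : Fin N, ∑ j : Fin (d x), ∑ s : Fin 2, (if ℓsig ⟨⟨x, j⟩, s⟩ = t then 1 else 0) := by
  classical
  rw [Fintype.card_subtype, Finset.card_filter, Fintype.sum_sum_type, Fintype.sum_sum_type,
    Fintype.sum_sum_type, Fintype.sum_sum_type]
  have hconst : ∀ (n : ℕ) (c : Fin 4),
      (∑ _i : Fin n, if c = t then 1 else 0) = if c = t then n else 0 := by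
    intro n c
    split_ifs <;> simp
  have hsig : (∑ p : Σ _x : SigIdx N d, Fin 2, if ℓsig p = t then 1 else 0) =
      ∑ x : Fin N, ∑ j : Fin (d x), ∑ s : Fin 2, (if ℓsig ⟨⟨x, j⟩, s⟩ = t then 1 else 0) := by
    rw [← Finset.univ_sigma_univ, Finset.sum_sigma]
    rw [← Finset.univ_sigma_univ, Finset.sum_sigma]
  simp only [Sum.elim_inl, Sum.elim_inr, hconst]
  erw [hsig]
  by_cases h0 : t0 = t <;> by_cases h1 : t1 = t <;> by_cases h2 : t2 = t <;> by_cases h3 : t3 = t <;>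
    simp [h0, h1, h2, h3] <;> omega

end Stmt8Aux

/-- Let `4 ∣ m`, `m > 0`, and let `π ≅ n₀·1 ⊕ n_s·χ_s ⊕ n_r·χ_r ⊕ n_rs·χ_rs ⊕ ⊕ d_i·σ_i`.
With `d_e = Σ_{i even} d_i` and `d_o = Σ_{i odd} d_i`, the restriction of `π` to `E₁` is
`(n₀+n_r+d_e)·1 ⊕ (n_s+n_rs+d_e)·α₁ ⊕ d_o·β₁ ⊕ d_o·(α₁⊗β₁)` and the restriction to `E₂` is
`(n₀+n_rs+d_e)·1 ⊕ (n_s+n_r+d_e)·α₂ ⊕ d_o·β₂ ⊕ d_o·(α₂⊗β₂)`. -/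
theorem stmt8 (m : ℕ) (hm : 0 < m) (h4 : 4 ∣ m) {V : Type} [AddCommGroup V] [Module ℂ V]
    (π : Representation ℂ (DihedralGroup m) V) (n₀ ns nr nrs : ℕ)
    (d : Fin (m / 2 - 1) → ℕ) (hdec : IsDecomposed π n₀ ns nr nrs d)
    (de dO : ℕ)
    (hde : de = ∑ i : Fin (m / 2 - 1), if Even (i.val + 1) then d i else 0)
    (hdO : dO = ∑ i : Fin (m / 2 - 1), if Odd (i.val + 1) then d i else 0) :
    RestrictionIso π (E₁ m) (n₀ + nr + de) (ns + nrs + de) dO dO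
      (fun _ => 1) (α m) (β₁ m) (fun g => α m g * β₁ m g) ∧
    RestrictionIso π (E₂ m) (n₀ + nrs + de) (ns + nr + de) dO dO
      (fun _ => 1) (α m) (β₂ m) (fun g => α m g * β₂ m g) := by
  classical
  have h2 : (2 : ℕ) ∣ m := dvd_trans (by norm_num) h4
  have hm4 : 4 ≤ m := Nat.le_of_dvd hm h4
  obtain ⟨q, hq⟩ := h4
  have hq1 : 1 ≤ q := by omega
  have hev : Even (m / 2) := ⟨q, by omega⟩
  have hoddm1 : Odd (m - 1) := ⟨2 * q - 1, by omega⟩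
  have hoddc1 : Odd (m / 2 - 1) := ⟨q - 1, by omega⟩
  haveI : NeZero m := ⟨hm.ne'⟩
  have hcc : ((m / 2 : ℕ) : ZMod m) + ((m / 2 : ℕ) : ZMod m) = 0 := by
    rw [← Nat.cast_add, (by omega : m / 2 + m / 2 = m), ZMod.natCast_self]
  have hcval : ((m / 2 : ℕ) : ZMod m).val = m / 2 :=
    ZMod.val_natCast_of_lt (Nat.div_lt_self hm one_lt_two)
  have hc_ne : ((m / 2 : ℕ) : ZMod m) ≠ 0 := by
    intro h
    have := congrArg ZMod.val h
    rw [hcval, ZMod.val_zero] at this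
    omega
  have hm1val : ((-1 : ZMod m)).val = m - 1 := by
    rw [Stmt8Aux.neg_one_eq hm4, ZMod.val_natCast_of_lt (by omega : m - 1 < m)]
  have hm1cval : ((-1 : ZMod m) + ((m / 2 : ℕ) : ZMod m)).val = m / 2 - 1 := by
    rw [Stmt8Aux.neg_one_add_c hm4, ZMod.val_natCast_of_lt (by omega : m / 2 - 1 < m)]
  have hmc_ne : (-1 : ZMod m) + ((m / 2 : ℕ) : ZMod m) ≠ -1 := by
    intro h
    have := congrArg ZMod.val h
    rw [hm1cval, hm1val] at this
    omega
  obtain ⟨e, he⟩ := hdec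
  have hchiS : ∀ g : DihedralGroup m, chiS m g = α m g := by
    rintro (i | i) <;> rfl
  -- the linear part
  have hwlin : ∀ E : Subgroup (DihedralGroup m),
      Stmt8Aux.HW (fun g => (LinearMap.pi fun i => linChar m n₀ ns nr nrs i g • LinearMap.proj i :
        (LinIdx n₀ ns nr nrs → ℂ) →ₗ[ℂ] (LinIdx n₀ ns nr nrs → ℂ))) E
      (fun i g => linChar m n₀ ns nr nrs i g) := by
    intro E
    refine ⟨LinearEquiv.refl ℂ _, fun g hg v j => ?_⟩
    simp [LinearMap.pi_apply]
  -- sigma-part labels and card computations (shared by both subgroups)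
  set ℓsig : (Σ _x : SigIdx (m / 2 - 1) d, Fin 2) → Fin 4 := fun p =>
    if Even (p.1.1.val + 1) then (if p.2 = 0 then 0 else 1) else (if p.2 = 0 then 2 else 3)
    with hℓsig
  have hS : ∀ t : Fin 4,
      (∑ x : Fin (m / 2 - 1), ∑ j : Fin (d x), ∑ s : Fin 2,
        if ℓsig ⟨⟨x, j⟩, s⟩ = t then 1 else 0) =
      if t = 0 ∨ t = 1 then de else dO := by
    intro t
    have hinner : ∀ x : Fin (m / 2 - 1), (∑ j : Fin (d x), ∑ s : Fin 2,
        if ℓsig ⟨⟨x, j⟩, s⟩ = t then 1 else 0) =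
        if Even (x.val + 1) then (if t = 0 ∨ t = 1 then d x else 0)
          else (if t = 0 ∨ t = 1 then 0 else d x) := by
      intro x
      have h4 : ∀ u : Fin 4, u = 0 ∨ u = 1 ∨ u = 2 ∨ u = 3 := by decide
      rcases h4 t with rfl | rfl | rfl | rfl <;> by_cases hEv : Even (x.val + 1) <;>
        simp [hℓsig, hEv, Fin.sum_univ_two] <;> (intros; first | rfl | decide)
    rw [Finset.sum_congr rfl fun x _ => hinner x]
    by_cases ht : t = 0 ∨ t = 1
    · simp only [ht, if_true, hde]
    · simp only [ht, if_false, hdO]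
      refine Finset.sum_congr rfl fun x _ => ?_
      by_cases hEv : Even (x.val + 1)
      · simp [hEv, Nat.not_odd_iff_even.mpr hEv]
      · simp [hEv, Nat.not_even_iff_odd.mp hEv]
  constructor
  · -- E₁
    have mem1 : ∀ g ∈ E₁ m, g = DihedralGroup.r 0 ∨ g = DihedralGroup.sr 0 ∨
        g = DihedralGroup.r ((m / 2 : ℕ) : ZMod m) ∨
        g = DihedralGroup.sr (0 + ((m / 2 : ℕ) : ZMod m)) :=
      Stmt8Aux.closure_four 0 _ hcc
    have hsig1 : ∀ x : SigIdx (m / 2 - 1) d,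
        Stmt8Aux.HW (sigmaLin m (x.1.val + 1)) (E₁ m)
        (fun (s : Fin 2) g => (if Even (x.1.val + 1) then 1 else β₁ m g) * (if s = 0 then 1 else α m g)) := by
      intro x
      by_cases hk : Even (x.1.val + 1)
      · have h := Stmt8Aux.HW_block (x.1.val + 1) 0 _ (E₁ m) 0 (Stmt8Aux.sig_r0 hm _)
          (Stmt8Aux.sig_sr0 hm _) (Stmt8Aux.sig_rc hm h2 _) (Stmt8Aux.sig_src hm h2 _) mem1
          (fun _ => 1) rfl rfl (by rw [hk.neg_one_pow]) (by rw [hk.neg_one_pow])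
        simpa [hk] using h
      · have hodd : Odd (x.1.val + 1) := Nat.not_even_iff_odd.mp hk
        have h := Stmt8Aux.HW_block (x.1.val + 1) 0 _ (E₁ m) 0 (Stmt8Aux.sig_r0 hm _)
          (Stmt8Aux.sig_sr0 hm _) (Stmt8Aux.sig_rc hm h2 _) (Stmt8Aux.sig_src hm h2 _) mem1
          (β₁ m) (by simp [β₁]) (by simp [β₁]) (by simp [β₁, hc_ne, hodd.neg_one_pow])
          (by simp [β₁, hc_ne, hodd.neg_one_pow])
        simpa [hk] using h
    have htot1 := Stmt8Aux.HW_prod (hwlin (E₁ m)) (Stmt8Aux.HW_pi _ _ hsig1)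
    have hπ1 : Stmt8Aux.HW (fun g => (π g : V →ₗ[ℂ] V)) (E₁ m)
        (Sum.elim (fun i g => linChar m n₀ ns nr nrs i g)
          (fun p : Σ _x : SigIdx (m / 2 - 1) d, Fin 2 => fun g =>
            (if Even (p.1.1.val + 1) then 1 else β₁ m g) * (if p.2 = 0 then 1 else α m g))) :=
      Stmt8Aux.HW_of_equiv e (fun g v => he g v) (by exact htot1)
    refine Stmt8Aux.restrictionIso_of_HW π (E₁ m) _
      (Sum.elim (Sum.elim (fun _ => 0) (Sum.elim (fun _ => 1)
        (Sum.elim (fun _ => 0) (fun _ => 1)))) ℓsig)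
      (fun _ => 1) (α m) (β₁ m) (fun g => α m g * β₁ m g) _ _ _ _ hπ1 ?_ ?_ ?_ ?_ ?_
    · rintro ((i | i | i | i) | p) g hg
      · rfl
      · simpa [linChar] using hchiS g
      · simp only [Sum.elim_inl, Sum.elim_inr]
        rcases mem1 g hg with rfl | rfl | rfl | rfl <;>
          simp [-r_zero, linChar, chiR, hcval, hev.neg_one_pow, Matrix.cons_val_zero]
      · simp only [Sum.elim_inl, Sum.elim_inr]
        rcases mem1 g hg with rfl | rfl | rfl | rfl <;>
          simp [-r_zero, linChar, chiRS, α, hcval, hev.neg_one_pow]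
      · obtain ⟨⟨x, j⟩, sc⟩ := p
        simp only [Sum.elim_inr, hℓsig]
        by_cases hEv : Even (x.val + 1) <;> by_cases hs : sc = 0 <;>
          simp [hEv, hs] <;> ring
    · rw [Stmt8Aux.card_fiber n₀ ns nr nrs ℓsig 0 1 0 1 0, hS 0]
      norm_num [Fin.ext_iff]
    · rw [Stmt8Aux.card_fiber n₀ ns nr nrs ℓsig 0 1 0 1 1, hS 1]
      norm_num [Fin.ext_iff]
    · rw [Stmt8Aux.card_fiber n₀ ns nr nrs ℓsig 0 1 0 1 2, hS 2]
      norm_num [Fin.ext_iff]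
    · rw [Stmt8Aux.card_fiber n₀ ns nr nrs ℓsig 0 1 0 1 3, hS 3]
      rw [if_neg (by decide), if_neg (by decide), if_neg (by decide), if_neg (by decide),
        if_neg (by decide)]
      omega
  · -- E₂
    have hset : ({DihedralGroup.r 1 * DihedralGroup.sr 0,
        DihedralGroup.r ((m / 2 : ℕ) : ZMod m)} : Set (DihedralGroup m)) =
        {DihedralGroup.sr (-1), DihedralGroup.r ((m / 2 : ℕ) : ZMod m)} := by
      rw [r_mul_sr, zero_sub]
    have mem2 : ∀ g ∈ E₂ m, g = DihedralGroup.r 0 ∨ g = DihedralGroup.sr (-1) ∨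
        g = DihedralGroup.r ((m / 2 : ℕ) : ZMod m) ∨
        g = DihedralGroup.sr ((-1) + ((m / 2 : ℕ) : ZMod m)) := by
      intro g hg
      refine Stmt8Aux.closure_four (-1) _ hcc g ?_
      rw [E₂, hset] at hg
      exact hg
    have hsig2 : ∀ x : SigIdx (m / 2 - 1) d,
        Stmt8Aux.HW (sigmaLin m (x.1.val + 1)) (E₂ m)
        (fun (s : Fin 2) g => (if Even (x.1.val + 1) then 1 else β₂ m g) * (if s = 0 then 1 else α m g)) := by
      intro x
      by_cases hk : Even (x.1.val + 1)
      · have h := Stmt8Aux.HW_block (x.1.val + 1) (-1) _ (E₂ m) _ (Stmt8Aux.sig_r0 hm _)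
          (Stmt8Aux.sig_srm1 hm4 _) (Stmt8Aux.sig_rc hm h2 _) (Stmt8Aux.sig_srm1c hm4 h2 _) mem2
          (fun _ => 1) rfl rfl (by rw [hk.neg_one_pow]) (by rw [hk.neg_one_pow])
        simpa [hk] using h
      · have hodd : Odd (x.1.val + 1) := Nat.not_even_iff_odd.mp hk
        have h := Stmt8Aux.HW_block (x.1.val + 1) (-1) _ (E₂ m) _ (Stmt8Aux.sig_r0 hm _)
          (Stmt8Aux.sig_srm1 hm4 _) (Stmt8Aux.sig_rc hm h2 _) (Stmt8Aux.sig_srm1c hm4 h2 _) mem2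
          (β₂ m) (by simp [β₂]) (by simp [β₂]) (by simp [β₂, hc_ne, hodd.neg_one_pow])
          (by simp [β₂, hmc_ne, hodd.neg_one_pow])
        simpa [hk] using h
    have htot2 := Stmt8Aux.HW_prod (hwlin (E₂ m)) (Stmt8Aux.HW_pi _ _ hsig2)
    have hπ2 : Stmt8Aux.HW (fun g => (π g : V →ₗ[ℂ] V)) (E₂ m)
        (Sum.elim (fun i g => linChar m n₀ ns nr nrs i g)
          (fun p : Σ _x : SigIdx (m / 2 - 1) d, Fin 2 => fun g =>
            (if Even (p.1.1.val + 1) then 1 else β₂ m g) * (if p.2 = 0 then 1 else α m g))) :=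
      Stmt8Aux.HW_of_equiv e (fun g v => he g v) (by exact htot2)
    refine Stmt8Aux.restrictionIso_of_HW π (E₂ m) _
      (Sum.elim (Sum.elim (fun _ => 0) (Sum.elim (fun _ => 1)
        (Sum.elim (fun _ => 1) (fun _ => 0)))) ℓsig)
      (fun _ => 1) (α m) (β₂ m) (fun g => α m g * β₂ m g) _ _ _ _ hπ2 ?_ ?_ ?_ ?_ ?_
    · rintro ((i | i | i | i) | p) g hg
      · rfl
      · simpa [linChar] using hchiS g
      · simp only [Sum.elim_inl, Sum.elim_inr]
        rcases mem2 g hg with rfl | rfl | rfl | rfl <;>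
          simp [-r_zero, linChar, chiR, α, hcval, hm1val, hm1cval, hev.neg_one_pow,
            hoddm1.neg_one_pow, hoddc1.neg_one_pow]
      · simp only [Sum.elim_inl, Sum.elim_inr]
        rcases mem2 g hg with rfl | rfl | rfl | rfl <;>
          simp [-r_zero, linChar, chiRS, hcval, hm1val, hm1cval, hev.neg_one_pow,
            hoddm1.neg_one_pow, hoddc1.neg_one_pow]
      · obtain ⟨⟨x, j⟩, sc⟩ := p
        simp only [Sum.elim_inr, hℓsig]
        by_cases hEv : Even (x.val + 1) <;> by_cases hs : sc = 0 <;>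
          simp [hEv, hs] <;> ring
    · rw [Stmt8Aux.card_fiber n₀ ns nr nrs ℓsig 0 1 1 0 0, hS 0]
      norm_num [Fin.ext_iff]
    · rw [Stmt8Aux.card_fiber n₀ ns nr nrs ℓsig 0 1 1 0 1, hS 1]
      norm_num [Fin.ext_iff]
    · rw [Stmt8Aux.card_fiber n₀ ns nr nrs ℓsig 0 1 1 0 2, hS 2]
      norm_num [Fin.ext_iff]
    · rw [Stmt8Aux.card_fiber n₀ ns nr nrs ℓsig 0 1 1 0 3, hS 3]
      rw [if_neg (by decide), if_neg (by decide), if_neg (by decide), if_neg (by decide),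
        if_neg (by decide)]
      omega
end

section
/- Let m be a positive integer divisible by 4 and let π be a finite-dimensional complex representation of D_m with character χ_π, decomposed as π ≅ n₀·1 ⊕ n_s·χ_s ⊕ n_r·χ_r ⊕ n_{rs}·χ_{rs} ⊕ ⊕_{i=1}^{m/2−1} d_i·σ_i. Then: n_s + n_r + d_e = ¼(χ_π(1) − 2χ_π(r s) + χ_π(r_c)); n_s + n_{rs} + d_e = ¼(χ_π(1) − 2χ_π(s) + χ_π(r_c)); and d_o = ¼(χ_π(1) − χ_π(r_c)). -/
open DihedralGroup

section Helpers

open LinearMap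

lemma trace_pi_comp_proj {ι : Type*} [Fintype ι] [DecidableEq ι] {M : ι → Type*}
    [∀ i, AddCommGroup (M i)] [∀ i, Module ℂ (M i)]
    [∀ i, Module.Finite ℂ (M i)] [∀ i, Module.Free ℂ (M i)]
    (f : ∀ i, M i →ₗ[ℂ] M i) :
    trace ℂ (∀ i, M i) (LinearMap.pi fun i => (f i).comp (LinearMap.proj i)) =
      ∑ i, trace ℂ (M i) (f i) := by
  classical
  let b : ∀ i, Module.Basis (Module.Free.ChooseBasisIndex ℂ (M i)) ℂ (M i) :=
    fun i => Module.Free.chooseBasis ℂ (M i)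
  rw [trace_eq_matrix_trace ℂ (Pi.basis b), Matrix.trace]
  rw [← Finset.univ_sigma_univ, Finset.sum_sigma]
  refine Finset.sum_congr rfl fun i _ => ?_
  rw [trace_eq_matrix_trace ℂ (b i), Matrix.trace]
  refine Finset.sum_congr rfl fun k _ => ?_
  simp [Matrix.diag, LinearMap.toMatrix_apply, Pi.basis_apply, Pi.basis_repr,
    LinearMap.pi_apply, Pi.single_eq_same]

lemma trace_sigmaLin (m k : ℕ) (g : DihedralGroup m) :
    trace ℂ (Fin 2 → ℂ) (sigmaLin m k g) = (sigmaMat m k g).trace := by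
  rw [sigmaLin, trace_eq_matrix_trace ℂ (Pi.basisFun ℂ (Fin 2))]
  rw [LinearMap.toMatrix_eq_toMatrix', LinearMap.toMatrix'_toLin']

end Helpers

/-- Let `4 ∣ m`, `m > 0`, and let `π ≅ n₀·1 ⊕ n_s·χ_s ⊕ n_r·χ_r ⊕ n_rs·χ_rs ⊕ ⊕ d_i·σ_i`
be a finite-dimensional complex representation of `D_m`, with character `χ_π(g) = tr (π g)`.
With `d_e = Σ_{i even} d_i`, `d_o = Σ_{i odd} d_i`, `r_c = r^(m/2)`, and Mathlib's
`sr 0 = s`, `r 1 * sr 0 = r·s`: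
`n_s + n_r + d_e = ¼(χ_π(1) − 2χ_π(rs) + χ_π(r_c))`,
`n_s + n_rs + d_e = ¼(χ_π(1) − 2χ_π(s) + χ_π(r_c))`, and
`d_o = ¼(χ_π(1) − χ_π(r_c))`. -/
theorem stmt9 (m : ℕ) (hm : 0 < m) (h4 : 4 ∣ m) {V : Type} [AddCommGroup V] [Module ℂ V]
    [FiniteDimensional ℂ V]
    (π : Representation ℂ (DihedralGroup m) V) (n₀ ns nr nrs : ℕ)
    (d : Fin (m / 2 - 1) → ℕ) (hdec : IsDecomposed π n₀ ns nr nrs d)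
    (de dO : ℕ)
    (hde : de = ∑ i : Fin (m / 2 - 1), if Even (i.val + 1) then d i else 0)
    (hdO : dO = ∑ i : Fin (m / 2 - 1), if Odd (i.val + 1) then d i else 0) :
    ((ns + nr + de : ℂ) =
      (LinearMap.trace ℂ V (π 1)
        - 2 * LinearMap.trace ℂ V (π (DihedralGroup.r 1 * DihedralGroup.sr 0))
        + LinearMap.trace ℂ V (π (DihedralGroup.r ((m / 2 : ℕ) : ZMod m)))) / 4) ∧
    ((ns + nrs + de : ℂ) =
      (LinearMap.trace ℂ V (π 1)
        - 2 * LinearMap.trace ℂ V (π (DihedralGroup.sr 0))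
        + LinearMap.trace ℂ V (π (DihedralGroup.r ((m / 2 : ℕ) : ZMod m)))) / 4) ∧
    ((dO : ℂ) =
      (LinearMap.trace ℂ V (π 1)
        - LinearMap.trace ℂ V (π (DihedralGroup.r ((m / 2 : ℕ) : ZMod m)))) / 4) := by
  classical
  obtain ⟨e, he⟩ := hdec
  haveI : NeZero m := ⟨hm.ne'⟩
  have hm2 : 2 ∣ m := dvd_trans ⟨2, rfl⟩ h4
  -- trace via conjugation
  have hconj : ∀ g : DihedralGroup m, LinearMap.trace ℂ V (π g)
      = LinearMap.trace ℂ (BigSpace m n₀ ns nr nrs d) (bigAct m n₀ ns nr nrs d g) := by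
    intro g
    rw [← LinearMap.trace_conj' (π g) e]
    congr 1
    refine LinearMap.ext fun v => ?_
    have h := he g (e.symm v)
    rw [e.apply_symm_apply] at h
    simpa [LinearEquiv.conj_apply] using h
  -- trace of the direct sum
  have htr : ∀ g : DihedralGroup m,
      LinearMap.trace ℂ (BigSpace m n₀ ns nr nrs d) (bigAct m n₀ ns nr nrs d g)
      = (∑ i : LinIdx n₀ ns nr nrs, linChar m n₀ ns nr nrs i g)
        + ∑ x : SigIdx (m / 2 - 1) d, (sigmaMat m (x.1.val + 1) g).trace := by
    intro g
    rw [bigAct, LinearMap.trace_prodMap']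
    congr 1
    · have hrw : (LinearMap.pi fun i => linChar m n₀ ns nr nrs i g • LinearMap.proj i :
          (LinIdx n₀ ns nr nrs → ℂ) →ₗ[ℂ] (LinIdx n₀ ns nr nrs → ℂ))
          = LinearMap.pi fun i =>
              ((linChar m n₀ ns nr nrs i g • LinearMap.id)).comp (LinearMap.proj i) := by
        ext v j
        simp
      rw [hrw, trace_pi_comp_proj]
      refine Finset.sum_congr rfl fun i _ => ?_
      rw [map_smul, LinearMap.trace_id]
      simp
    · rw [trace_pi_comp_proj]
      exact Finset.sum_congr rfl fun x _ => trace_sigmaLin _ _ _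
  set A : ℂ := ∑ i : Fin (m / 2 - 1), (d i : ℂ) with hA
  set E : ℂ := ∑ i : Fin (m / 2 - 1), (-1 : ℂ) ^ (i.val + 1) * (d i : ℂ) with hE
  -- trace at 1
  have hχ1 : LinearMap.trace ℂ V (π 1) = ((n₀ : ℂ) + ns + nr + nrs) + 2 * A := by
    rw [hconj, htr, one_def]
    have h1 : (∑ i : LinIdx n₀ ns nr nrs, linChar m n₀ ns nr nrs i (DihedralGroup.r 0))
        = ((n₀ : ℂ) + ns + nr + nrs) := by
      simp [linChar, chiS, chiR, chiRS, Fintype.sum_sum_type, ZMod.val_zero, -DihedralGroup.r_zero]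
      ring
    have h2 : (∑ x : SigIdx (m / 2 - 1) d,
        (sigmaMat m (x.1.val + 1) (DihedralGroup.r 0)).trace) = 2 * A := by
      have hterm : ∀ x : SigIdx (m / 2 - 1) d,
          (sigmaMat m (x.1.val + 1) (DihedralGroup.r 0)).trace = 2 := by
        intro x
        simp [sigmaMat, rotMat, Matrix.trace_fin_two, ZMod.val_zero]
        ring
      rw [Finset.sum_congr rfl fun x _ => hterm x, hA, ← Finset.univ_sigma_univ,
        Finset.sum_sigma, Finset.mul_sum]
      simp [mul_comm]
    rw [h1, h2]
  -- traces at reflections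
  have hsig0 : ∀ j : ZMod m, (∑ x : SigIdx (m / 2 - 1) d,
      (sigmaMat m (x.1.val + 1) (DihedralGroup.sr j)).trace) = 0 := by
    intro j
    refine Finset.sum_eq_zero fun x _ => ?_
    simp [sigmaMat, rotMat, flipMat, Matrix.trace_fin_two, Matrix.mul_apply, Fin.sum_univ_two]
  have hvalneg : (-1 : ZMod m).val = m - 1 := by
    obtain ⟨m', rfl⟩ := Nat.exists_eq_succ_of_ne_zero hm.ne'
    simpa using ZMod.val_neg_one m'
  have hoddneg : Odd ((-1 : ZMod m).val) := by
    rw [hvalneg]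
    exact Nat.Even.sub_odd hm (even_iff_two_dvd.mpr hm2) odd_one
  have hχ2 : LinearMap.trace ℂ V (π (DihedralGroup.r 1 * DihedralGroup.sr 0))
      = (n₀ : ℂ) - ns - nr + nrs := by
    rw [hconj, htr, DihedralGroup.r_mul_sr, hsig0, add_zero, zero_sub]
    simp [linChar, chiS, chiR, chiRS, Fintype.sum_sum_type, hoddneg.neg_one_pow]
    ring
  have hχ3 : LinearMap.trace ℂ V (π (DihedralGroup.sr 0))
      = (n₀ : ℂ) - ns + nr - nrs := by
    rw [hconj, htr, hsig0, add_zero]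
    simp [linChar, chiS, chiR, chiRS, Fintype.sum_sum_type, ZMod.val_zero]
    ring
  -- trace at r^(m/2)
  have hvalc : (((m / 2 : ℕ) : ZMod m)).val = m / 2 :=
    ZMod.val_natCast_of_lt (Nat.div_lt_self hm one_lt_two)
  have hevenc : Even (m / 2) := by
    obtain ⟨t, rfl⟩ := h4
    have : 4 * t / 2 = 2 * t := by omega
    rw [this]
    exact even_two_mul t
  have hχ4 : LinearMap.trace ℂ V (π (DihedralGroup.r ((m / 2 : ℕ) : ZMod m)))
      = ((n₀ : ℂ) + ns + nr + nrs) + 2 * E := by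
    rw [hconj, htr]
    have h1 : (∑ i : LinIdx n₀ ns nr nrs,
        linChar m n₀ ns nr nrs i (DihedralGroup.r ((m / 2 : ℕ) : ZMod m)))
        = ((n₀ : ℂ) + ns + nr + nrs) := by
      simp [linChar, chiS, chiR, chiRS, Fintype.sum_sum_type, hvalc, hevenc.neg_one_pow]
      ring
    have hterm : ∀ x : SigIdx (m / 2 - 1) d,
        (sigmaMat m (x.1.val + 1) (DihedralGroup.r ((m / 2 : ℕ) : ZMod m))).trace
        = 2 * (-1 : ℂ) ^ (x.1.val + 1) := by
      intro x
      have hmne : (m : ℝ) ≠ 0 := Nat.cast_ne_zero.mpr hm.ne'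
      have h2m : ((m / 2 : ℕ) : ℝ) * 2 = (m : ℝ) := by
        exact_mod_cast congrArg (Nat.cast : ℕ → ℝ) (Nat.div_mul_cancel hm2)
      have hang : 2 * Real.pi * (x.1.val + 1 : ℕ) * ((((m / 2 : ℕ) : ZMod m)).val : ℝ) / m
          = ((x.1.val + 1 : ℕ) : ℝ) * Real.pi := by
        rw [hvalc]
        field_simp
        nlinarith [h2m]
      have hcos : Real.cos (((x.1.val + 1 : ℕ) : ℝ) * Real.pi)
          = (-1 : ℝ) ^ (x.1.val + 1) := by
        have := Real.cos_nat_mul_pi_sub 0 (x.1.val + 1)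
        simpa using this
      simp only [sigmaMat, rotMat, Matrix.trace_fin_two, hang, hcos]
      push_cast
      simp [Matrix.cons_val_zero, Matrix.cons_val_one]
      ring
    have h2 : (∑ x : SigIdx (m / 2 - 1) d,
        (sigmaMat m (x.1.val + 1) (DihedralGroup.r ((m / 2 : ℕ) : ZMod m))).trace)
        = 2 * E := by
      rw [Finset.sum_congr rfl fun x _ => hterm x, hE, ← Finset.univ_sigma_univ,
        Finset.sum_sigma, Finset.mul_sum]
      refine Finset.sum_congr rfl fun i _ => ?_
      simp [Finset.sum_const, Finset.card_univ]
      ring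
    rw [h1, h2]
  -- multiplicity identities
  have h2de : 2 * (de : ℂ) = A + E := by
    have : (de : ℂ) = ∑ i : Fin (m / 2 - 1), if Even (i.val + 1) then (d i : ℂ) else 0 := by
      rw [hde]
      push_cast [apply_ite (Nat.cast : ℕ → ℂ)]
      rfl
    rw [this, hA, hE, Finset.mul_sum, ← Finset.sum_add_distrib]
    refine Finset.sum_congr rfl fun i _ => ?_
    by_cases h : Even (i.val + 1)
    · rw [if_pos h, h.neg_one_pow]
      ring
    · rw [if_neg h, (Nat.not_even_iff_odd.mp h).neg_one_pow]
      ring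
  have h2do : 2 * (dO : ℂ) = A - E := by
    have : (dO : ℂ) = ∑ i : Fin (m / 2 - 1), if Odd (i.val + 1) then (d i : ℂ) else 0 := by
      rw [hdO]
      push_cast [apply_ite (Nat.cast : ℕ → ℂ)]
      rfl
    rw [this, hA, hE, Finset.mul_sum, ← Finset.sum_sub_distrib]
    refine Finset.sum_congr rfl fun i _ => ?_
    by_cases h : Odd (i.val + 1)
    · rw [if_pos h, h.neg_one_pow]
      ring
    · rw [if_neg h, (Nat.not_odd_iff_even.mp h).neg_one_pow]
      ring
  refine ⟨?_, ?_, ?_⟩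
  · rw [hχ1, hχ2, hχ4]
    linear_combination h2de / 2
  · rw [hχ1, hχ3, hχ4]
    linear_combination h2de / 2
  · rw [hχ1, hχ4]
    linear_combination h2do / 2
end
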